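/- Let $\mathcal{D}(\rho) = \sum_{l=0}^{N-1} \epsilon_l P_l \rho P_l$ be a Pauli channel with probabilities $\epsilon_l$, where $P_0 = I$ and each $P_l$ is a self-inverse unitary with $P_l P_t = \pm P_t P_l$. Define the quasi-inverse map $\mathcal{R}(\rho) = C \sum_{l=0}^{N-1} s_l \epsilon_l P_l \rho P_l$ with $s_0=1$, $s_l=-1$ ($l\neq 0$), $C = (\epsilon_0^2 - \sum_{l\neq 0}\epsilon_l^2)^{-1} > 0$. If the Pauli conjugation superoperators $\mathcal{P}_l(\rho) = P_l \rho P_l$ pairwise commute, then $\mathcal{R} \circ \mathcal{D} = I + \mathcal{E}$ where $\mathcal{E} = C\sum_{l \neq 0, t \neq 0, t \neq l} s_l \epsilon_l \epsilon_t \, \mathcal{P}_l \mathcal{P}_t + C \sum_{l\neq 0}(s_l + 1)\epsilon_l \epsilon_0 \mathcal{P}_l$; in particular, since $s_l = -1$ for $l\neq 0$, $\mathcal{R}\circ\mathcal{D} - I = -C\sum_{l \neq 0, t \neq 0, t \neq l} \epsilon_l \epsilon_t \mathcal{P}_l \mathcal{P}_t$. -/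
import Mathlib

private lemma split_double_sum {A : Type*} [AddCommMonoid A]
    (N : ℕ) (hN : 0 < N) (g : ℕ → ℕ → A) :
    ∑ l ∈ Finset.range N, ∑ t ∈ Finset.range N, g l t
      = (g 0 0 + ∑ l ∈ (Finset.range N).filter (· ≠ 0), g l l)
        + (∑ l ∈ (Finset.range N).filter (· ≠ 0), (g 0 l + g l 0))
        + ∑ l ∈ (Finset.range N).filter (· ≠ 0),
            ∑ t ∈ (Finset.range N).filter (fun t => t ≠ 0 ∧ t ≠ l), g l t := by
  have h0 : (0:ℕ) ∈ Finset.range N := Finset.mem_range.mpr hN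
  have hfil : (Finset.range N).filter (· ≠ 0) = (Finset.range N).erase 0 :=
    Finset.filter_ne' _ _
  have hsub : ∀ (f : ℕ → A), ∑ t ∈ Finset.range N, f t
      = f 0 + ∑ t ∈ (Finset.range N).filter (· ≠ 0), f t := by
    intro f; rw [hfil]; exact (Finset.add_sum_erase _ f h0).symm
  have hfil2 : ∀ l : ℕ, (Finset.range N).filter (fun t => t ≠ 0 ∧ t ≠ l)
      = ((Finset.range N).filter (· ≠ 0)).erase l := by
    intro l; ext t
    simp only [Finset.mem_filter, Finset.mem_erase]
    tauto
  have hsub2 : ∀ l ∈ (Finset.range N).filter (· ≠ 0), ∀ (f : ℕ → A),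
      ∑ t ∈ (Finset.range N).filter (· ≠ 0), f t
      = f l + ∑ t ∈ (Finset.range N).filter (fun t => t ≠ 0 ∧ t ≠ l), f t := by
    intro l hl f; rw [hfil2 l]; exact (Finset.add_sum_erase _ f hl).symm
  rw [hsub (fun l => ∑ t ∈ Finset.range N, g l t)]
  rw [hsub (fun t => g 0 t)]
  rw [Finset.sum_congr rfl (fun l hl => ((hsub (fun t => g l t)).trans
    (by rw [hsub2 l hl (fun t => g l t)]) :
      ∑ t ∈ Finset.range N, g l t
        = g l 0 + (g l l + ∑ t ∈ (Finset.range N).filter (fun t => t ≠ 0 ∧ t ≠ l), g l t)))]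
  rw [Finset.sum_add_distrib, Finset.sum_add_distrib, Finset.sum_add_distrib]
  abel

/-- Residual of quasi-probabilistic error cancellation.  We work in the algebra `A` of
superoperators; `P l` is the Pauli-conjugation superoperator `𝒫_l(ρ) = P_l ρ P_l`, so
`P 0 = 1`, `P l * P l = 1`, and the `P l` pairwise commute.  With
`𝒟 = ∑ ε_l 𝒫_l`, `ℛ = C • ∑ s_l ε_l 𝒫_l`, `s_0 = 1`, `s_l = -1` otherwise, and
`C = (ε_0² - ∑_{l≠0} ε_l²)⁻¹ > 0`, we have
`ℛ𝒟 = I + ℰ` with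
`ℰ = C • (∑_{l≠0,t≠0,t≠l} s_l ε_l ε_t 𝒫_l𝒫_t + ∑_{l≠0} (s_l+1) ε_l ε_0 𝒫_l)`, and in
particular `ℛ𝒟 - I = -C • ∑_{l≠0,t≠0,t≠l} ε_l ε_t 𝒫_l𝒫_t`. -/
theorem stmt3 {A : Type*} [Ring A] [Algebra ℝ A]
    (N : ℕ) (hN : 0 < N) (ε : ℕ → ℝ) (hnn : ∀ l ∈ Finset.range N, 0 ≤ ε l)
    (hsum : ∑ l ∈ Finset.range N, ε l = 1)
    (s : ℕ → ℝ) (hs : ∀ l, s l = if l = 0 then 1 else -1)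
    (P : ℕ → A) (hP0 : P 0 = 1) (hPsq : ∀ l, P l * P l = 1)
    (hPcomm : ∀ l t, P l * P t = P t * P l)
    (C : ℝ) (hCpos : 0 < C)
    (hC : C = (ε 0 ^ 2 - ∑ l ∈ (Finset.range N).filter (· ≠ 0), ε l ^ 2)⁻¹)
    (D R : A) (hD : D = ∑ l ∈ Finset.range N, ε l • P l)
    (hR : R = C • ∑ l ∈ Finset.range N, (s l * ε l) • P l) :
    R * D = 1 + (C • (∑ l ∈ (Finset.range N).filter (· ≠ 0),
        ∑ t ∈ (Finset.range N).filter (fun t => t ≠ 0 ∧ t ≠ l),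
          (s l * ε l * ε t) • (P l * P t))
      + C • (∑ l ∈ (Finset.range N).filter (· ≠ 0), ((s l + 1) * ε l * ε 0) • P l)) ∧
    R * D - 1 = -(C • ∑ l ∈ (Finset.range N).filter (· ≠ 0),
        ∑ t ∈ (Finset.range N).filter (fun t => t ≠ 0 ∧ t ≠ l),
          (ε l * ε t) • (P l * P t)) := by
  have hs0 : s 0 = 1 := by rw [hs]; simp
  have hsl : ∀ l ∈ (Finset.range N).filter (· ≠ 0), s l = -1 := by
    intro l hl
    rw [hs]
    simp [(Finset.mem_filter.mp hl).2]
  have hX : C * (ε 0 ^ 2 - ∑ l ∈ (Finset.range N).filter (· ≠ 0), ε l ^ 2) = 1 := by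
    rw [hC]
    apply inv_mul_cancel₀
    intro h
    rw [hC, h] at hCpos
    simp at hCpos
  -- expand the product
  have hRD : R * D = C • ∑ l ∈ Finset.range N, ∑ t ∈ Finset.range N,
      (s l * ε l * ε t) • (P l * P t) := by
    rw [hR, hD, smul_mul_assoc, Finset.sum_mul_sum]
    congr 1
    refine Finset.sum_congr rfl fun l _ => Finset.sum_congr rfl fun t _ => ?_
    rw [smul_mul_smul_comm]
  rw [split_double_sum N hN] at hRD
  -- diagonal piece
  have hdiag : C • (((s 0 * ε 0 * ε 0) • (P 0 * P 0) : A)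
      + ∑ l ∈ (Finset.range N).filter (· ≠ 0), (s l * ε l * ε l) • (P l * P l)) = 1 := by
    have hd1 : ∑ l ∈ (Finset.range N).filter (· ≠ 0), ((s l * ε l * ε l) • (P l * P l) : A)
        = ∑ l ∈ (Finset.range N).filter (· ≠ 0), (-1 * ε l * ε l) • (1 : A) :=
      Finset.sum_congr rfl fun l hl => by rw [hsl l hl, hPsq l]
    rw [hs0, hPsq 0, hd1, ← Finset.sum_smul, ← add_smul, smul_smul]
    have hd2 : ∑ l ∈ (Finset.range N).filter (· ≠ 0), (-1 * ε l * ε l)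
        = -∑ l ∈ (Finset.range N).filter (· ≠ 0), ε l ^ 2 := by
      rw [← Finset.sum_neg_distrib]
      exact Finset.sum_congr rfl fun l _ => by ring
    have hd3 : (1 * ε 0 * ε 0 + ∑ l ∈ (Finset.range N).filter (· ≠ 0), -1 * ε l * ε l)
        = ε 0 ^ 2 - ∑ l ∈ (Finset.range N).filter (· ≠ 0), ε l ^ 2 := by
      rw [hd2]; ring
    rw [hd3, hX, one_smul]
  -- cross (first-order) piece
  have hcross : (∑ l ∈ (Finset.range N).filter (· ≠ 0),
      (((s 0 * ε 0 * ε l) • (P 0 * P l) : A) + (s l * ε l * ε 0) • (P l * P 0)))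
      = ∑ l ∈ (Finset.range N).filter (· ≠ 0), ((s l + 1) * ε l * ε 0) • P l := by
    refine Finset.sum_congr rfl fun l hl => ?_
    simp only [hs0, hP0, one_mul, mul_one]
    rw [← add_smul]
    congr 1
    ring
  have key : R * D = 1 + (C • (∑ l ∈ (Finset.range N).filter (· ≠ 0),
        ∑ t ∈ (Finset.range N).filter (fun t => t ≠ 0 ∧ t ≠ l),
          (s l * ε l * ε t) • (P l * P t))
      + C • (∑ l ∈ (Finset.range N).filter (· ≠ 0), ((s l + 1) * ε l * ε 0) • P l)) := by
    rw [hRD, smul_add, smul_add, hdiag, hcross]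
    ring_nf
    abel
  refine ⟨key, ?_⟩
  rw [key]
  have h2 : (∑ l ∈ (Finset.range N).filter (· ≠ 0), (((s l + 1) * ε l * ε 0) • P l : A)) = 0 := by
    refine Finset.sum_eq_zero fun l hl => ?_
    rw [hsl l hl]
    norm_num
  have h1 : (∑ l ∈ (Finset.range N).filter (· ≠ 0),
      ∑ t ∈ (Finset.range N).filter (fun t => t ≠ 0 ∧ t ≠ l),
        ((s l * ε l * ε t) • (P l * P t) : A))
      = -∑ l ∈ (Finset.range N).filter (· ≠ 0),
      ∑ t ∈ (Finset.range N).filter (fun t => t ≠ 0 ∧ t ≠ l),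
        (ε l * ε t) • (P l * P t) := by
    rw [← Finset.sum_neg_distrib]
    refine Finset.sum_congr rfl fun l hl => ?_
    rw [← Finset.sum_neg_distrib]
    refine Finset.sum_congr rfl fun t _ => ?_
    rw [hsl l hl, ← neg_smul]
    congr 1
    ring
  rw [h1, h2, smul_zero, add_zero, smul_neg]
  abel
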